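/- Let f_1, …, f_k be real analytic functions on a real interval I, and let Υ = {x ∈ I : there exists i ≤ k with W(f_1, …, f_i)(x) = 0}. If Υ is finite, then for any real constants a_1, …, a_k that are not all zero, Z_I(a_1 f_1 + … + a_k f_k) ≤ (1 + |Υ|)·k − 1. -/

import Mathlib

/-
Away from the finite set `Υ` all the Wronskians `W(f₀, …, f_{j-1})` are nonzero, and on an
interval where this holds a nontrivial combination of `k` functions has at most `k - 1` zeros:
dividing by `f₀ ≠ 0` and differentiating gives a combination of the `k - 1` functions
`(f_i / f₀)'`, whose Wronskians are `W(f₀, …, f_i) / f₀^(i+1)`, and by Rolle's theorem the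
number of zeros drops by at most one. The points of `Υ` cut `I` into at most `|Υ| + 1` such
intervals, so there are at most `(|Υ| + 1)(k - 1) + |Υ| = (1 + |Υ|) k - 1` zeros.
-/

/-- The Wronskian of the first `j` functions of the family `f`, with derivatives
taken within the set `I`. -/
noncomputable def wronskianOn (I : Set ℝ) (f : ℕ → ℝ → ℝ) (j : ℕ) (x : ℝ) : ℝ :=
  (Matrix.of fun r c : Fin j => iteratedDerivWithin (r : ℕ) (f (c : ℕ)) I x).det

open Set Filter Topology
open scoped ContDiff

noncomputable def derivDivFirst (s : Set ℝ) (g : ℕ → ℝ → ℝ) (i : ℕ) : ℝ → ℝ :=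
  derivWithin (fun y => g (i + 1) y / g 0 y) s

lemma wronskianOn_one (s : Set ℝ) (g : ℕ → ℝ → ℝ) (x : ℝ) : wronskianOn s g 1 x = g 0 x := by
  simp [wronskianOn]

section Wronskian

variable {s : Set ℝ} {g u : ℕ → ℝ → ℝ} {m : ℕ} {x : ℝ}

lemma wronskianOn_congr {g' : ℕ → ℝ → ℝ} (h : ∀ i < m, EqOn (g i) (g' i) s) (hx : x ∈ s) :
    wronskianOn s g m x = wronskianOn s g' m x := by
  unfold wronskianOn
  congr 1
  ext r c
  exact iteratedDerivWithin_congr (h c c.2) hx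

lemma wronskianOn_inter_of_isOpen {U : Set ℝ} (hU : IsOpen U) (hx : x ∈ U) :
    wronskianOn (s ∩ U) g m x = wronskianOn s g m x := by
  simp only [wronskianOn, iteratedDerivWithin, iteratedFDerivWithin_inter (hU.mem_nhds hx)]

lemma wronskianOn_mul_left (hs : UniqueDiffOn ℝ s) {φ : ℝ → ℝ} (hφ : ContDiffOn ℝ ∞ φ s)
    (hu : ∀ i < m, ContDiffOn ℝ ∞ (u i) s) (hx : x ∈ s) :
    wronskianOn s (fun i y => φ y * u i y) m x = φ x ^ m * wronskianOn s u m x := by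
  let L : Matrix (Fin m) (Fin m) ℝ :=
    .of fun r i => ((r : ℕ).choose i : ℝ) * iteratedDerivWithin (r - i) φ s x
  have hLdet : L.det = φ x ^ m := by
    rw [Matrix.det_of_isLowerTriangular L fun r i hri => by
      simp [L, Nat.choose_eq_zero_of_lt (show (r : ℕ) < i from hri)]]
    simp [L]
  have hfactor : (Matrix.of fun r c : Fin m =>
      iteratedDerivWithin r (fun y => φ y * u c y) s x) =
      L * .of fun r c : Fin m => iteratedDerivWithin r (u c) s x := by
    ext r c
    have hleib := iteratedDerivWithin_mul hx hs ((hu c c.2 x hx).of_le (mod_cast le_top))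
      ((hφ x hx).of_le (mod_cast le_top)) (n := r)
    rw [show (u c * φ) = fun y => φ y * u c y from funext fun y => mul_comm _ _] at hleib
    simp only [Matrix.of_apply, hleib, Matrix.mul_apply, L]
    rw [Fin.sum_univ_eq_sum_range (fun i => ((r : ℕ).choose i : ℝ) *
        iteratedDerivWithin (r - i) φ s x * iteratedDerivWithin i (u c) s x)]
    refine (Finset.sum_congr rfl fun i _ => by ring).trans
      (Finset.sum_subset (Finset.range_subset_range.2 r.2) fun i _ hi => ?_)
    simp [Nat.choose_eq_zero_of_lt (by simpa using hi : (r : ℕ) < i)]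
  rw [wronskianOn, hfactor, Matrix.det_mul, hLdet, wronskianOn]

lemma wronskianOn_succ_of_eqOn_one (hu : EqOn (u 0) 1 s) (hx : x ∈ s) :
    wronskianOn s u (m + 1) x = wronskianOn s (fun i => derivWithin (u (i + 1)) s) m x := by
  have hcol : ∀ r : ℕ, iteratedDerivWithin r (u 0) s x = if r = 0 then 1 else 0 := fun r => by
    rw [iteratedDerivWithin_congr hu hx]
    exact iteratedDerivWithin_const
  rw [wronskianOn, Matrix.det_succ_column_zero, Fin.sum_univ_succ]
  simp [hcol, wronskianOn, Matrix.submatrix, iteratedDerivWithin_succ']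

lemma wronskianOn_succ_eq_pow_mul (hs : UniqueDiffOn ℝ s) (hg : ∀ i < m + 1, ContDiffOn ℝ ∞ (g i) s)
    (hg0 : ∀ y ∈ s, g 0 y ≠ 0) (hx : x ∈ s) :
    wronskianOn s g (m + 1) x = g 0 x ^ (m + 1) * wronskianOn s (derivDivFirst s g) m x := by
  have hquot : ∀ i < m + 1, ContDiffOn ℝ ∞ (fun y => g i y / g 0 y) s := fun i hi =>
    (hg i hi).div (hg 0 m.succ_pos) hg0
  rw [wronskianOn_congr (g' := fun i y => g 0 y * (g i y / g 0 y))
      (fun i _ y hy => (mul_div_cancel₀ _ (hg0 y hy)).symm) hx,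
    wronskianOn_mul_left hs (hg 0 m.succ_pos) hquot hx,
    wronskianOn_succ_of_eqOn_one (fun y hy => div_self (hg0 y hy)) hx]
  rfl

end Wronskian

theorem Set.encard_le_coe_of_forall_finset_card_le {α : Type*} {A : Set α} {n : ℕ}
    (h : ∀ S : Finset α, ↑S ⊆ A → S.card ≤ n) : A.encard ≤ n := by
  rcases A.finite_or_infinite with hA | hA
  · rw [← hA.coe_toFinset, encard_coe_eq_coe_finsetCard]
    exact_mod_cast h _ (by simp)
  · obtain ⟨S, hS, hcard⟩ := hA.exists_subset_card_eq (n + 1)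
    have := h S hS
    omega

theorem Set.OrdConnected.encard_zeros_le_encard_deriv_zeros_add_one {J : Set ℝ}
    (hJ : J.OrdConnected) {q : ℝ → ℝ} (hq : ContinuousOn q J) :
    {x ∈ J | q x = 0}.encard ≤ {x ∈ interior J | deriv q x = 0}.encard + 1 := by
  rcases {x ∈ interior J | deriv q x = 0}.finite_or_infinite with hB | hB
  swap
  · simp [hB.encard_eq]
  rw [← hB.coe_toFinset, encard_coe_eq_coe_finsetCard]
  refine mod_cast encard_le_coe_of_forall_finset_card_le fun S hS =>
    Finset.card_le_of_interleaved fun x hx y hy hxy _ => ?_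
  obtain ⟨hxJ, hqx⟩ := hS hx
  obtain ⟨hyJ, hqy⟩ := hS hy
  obtain ⟨z, hz, hz0⟩ := exists_deriv_eq_zero hxy (hq.mono (hJ.out hxJ hyJ)) (hqx.trans hqy.symm)
  have hzJ : z ∈ interior J :=
    isOpen_Ioo.subset_interior_iff.2 (Ioo_subset_Icc_self.trans (hJ.out hxJ hyJ)) hz
  exact ⟨z, hB.mem_toFinset.2 ⟨hzJ, hz0⟩, hz⟩

lemma setOf_sum_mul_eq_zero_eq_empty {J : Set ℝ} {k : ℕ} {g : ℕ → ℝ → ℝ} {a : ℕ → ℝ}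
    (hW : ∀ x ∈ J, wronskianOn J g 1 x ≠ 0) (ha : ∃ i < k + 1, a i ≠ 0)
    (htail : ∀ i < k, a (i + 1) = 0) :
    {x ∈ J | ∑ i ∈ Finset.range (k + 1), a i * g i x = 0} = ∅ := by
  have ha0 : a 0 ≠ 0 := by
    obtain ⟨_ | i, hi, hai⟩ := ha
    · exact hai
    · exact absurd (htail i (by omega)) hai
  refine eq_empty_of_forall_notMem fun x ⟨hx, hsum⟩ =>
    mul_ne_zero ha0 (wronskianOn_one J g x ▸ hW x hx) ?_
  rwa [Finset.sum_range_succ', Finset.sum_eq_zero fun i hi => by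
    rw [htail i (Finset.mem_range.1 hi), zero_mul], zero_add] at hsum

lemma contDiffOn_derivDivFirst {s : Set ℝ} (hs : UniqueDiffOn ℝ s) {k : ℕ} {g : ℕ → ℝ → ℝ}
    (hg : ∀ i < k + 1, ContDiffOn ℝ ∞ (g i) s) (hg0 : ∀ x ∈ s, g 0 x ≠ 0) :
    ∀ i < k, ContDiffOn ℝ ∞ (derivDivFirst s g i) s := fun i hi =>
  ((hg (i + 1) (by omega)).div (hg 0 k.succ_pos) hg0).derivWithin hs (by simp)

lemma wronskianOn_interior_derivDivFirst_ne_zero {J : Set ℝ} {k : ℕ} {g : ℕ → ℝ → ℝ}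
    (hg : ∀ i < k + 1, ContDiffOn ℝ ∞ (g i) J) (hg0 : ∀ x ∈ J, g 0 x ≠ 0)
    (hW : ∀ x ∈ J, wronskianOn J g (k + 1) x ≠ 0) {x : ℝ} (hx : x ∈ interior J) :
    wronskianOn (interior J) (derivDivFirst (interior J) g) k x ≠ 0 := by
  have hWJ := hW x (interior_subset hx)
  rw [← wronskianOn_inter_of_isOpen isOpen_interior hx, inter_eq_right.2 interior_subset,
    wronskianOn_succ_eq_pow_mul isOpen_interior.uniqueDiffOn
      (fun i hi => (hg i hi).mono interior_subset) (fun y hy => hg0 y (interior_subset hy)) hx]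
    at hWJ
  exact right_ne_zero_of_mul hWJ

theorem Set.OrdConnected.encard_setOf_sum_mul_eq_zero_le_derivDivFirst {J : Set ℝ}
    (hJ : J.OrdConnected) {k : ℕ} {g : ℕ → ℝ → ℝ} (hg : ∀ i < k + 2, ContDiffOn ℝ ∞ (g i) J)
    (hg0 : ∀ x ∈ J, g 0 x ≠ 0) (a : ℕ → ℝ) :
    {x ∈ J | ∑ i ∈ Finset.range (k + 2), a i * g i x = 0}.encard ≤
      {x ∈ interior J | ∑ i ∈ Finset.range (k + 1),
        a (i + 1) * derivDivFirst (interior J) g i x = 0}.encard + 1 := by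
  have hquot : ∀ i < k + 2, ContDiffOn ℝ ∞ (fun y => g i y / g 0 y) J := fun i hi =>
    (hg i hi).div (hg 0 (by omega)) hg0
  set q : ℝ → ℝ := fun y => a 0 + ∑ i ∈ Finset.range (k + 1), a (i + 1) * (g (i + 1) y / g 0 y)
  have hzeros : {x ∈ J | ∑ i ∈ Finset.range (k + 2), a i * g i x = 0} = {x ∈ J | q x = 0} := by
    ext x
    refine and_congr_right fun hx => ?_
    have hqg : q x * g 0 x = ∑ i ∈ Finset.range (k + 2), a i * g i x := by
      simp only [q, add_mul, Finset.sum_mul, Finset.sum_range_succ' _ (k + 1)]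
      rw [add_comm]
      congr 1
      exact Finset.sum_congr rfl fun i _ => by rw [mul_assoc, div_mul_cancel₀ _ (hg0 x hx)]
    rw [← hqg, mul_eq_zero, or_iff_left (hg0 x hx)]
  have hderiv : ∀ x ∈ interior J, HasDerivAt q
      (∑ i ∈ Finset.range (k + 1), a (i + 1) * derivDivFirst (interior J) g i x) x := by
    intro x hx
    have hdiv : ∀ i ∈ Finset.range (k + 1), HasDerivAt (fun y => g (i + 1) y / g 0 y)
        (derivDivFirst (interior J) g i x) x := fun i hi => by
      rw [derivDivFirst, derivWithin_of_isOpen isOpen_interior hx]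
      exact (((hquot (i + 1) (by simpa using hi)).contDiffAt
        (mem_interior_iff_mem_nhds.1 hx)).differentiableAt (by simp)).hasDerivAt
    exact (HasDerivAt.fun_sum fun i hi => (hdiv i hi).const_mul (a (i + 1))).const_add (a 0)
  have hq : ContinuousOn q J := continuousOn_const.add (continuousOn_finsetSum _ fun i hi =>
    continuousOn_const.mul (hquot (i + 1) (by simpa using hi)).continuousOn)
  rw [hzeros]
  refine (hJ.encard_zeros_le_encard_deriv_zeros_add_one hq).trans
    (add_le_add_left (encard_le_encard ?_) 1)
  rintro x ⟨hx, hqx⟩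
  exact ⟨hx, (hderiv x hx).deriv ▸ hqx⟩

theorem Set.OrdConnected.encard_setOf_sum_mul_eq_zero_le {J : Set ℝ} (hJ : J.OrdConnected)
    {k : ℕ} {g : ℕ → ℝ → ℝ} (hg : ∀ i < k + 1, ContDiffOn ℝ ∞ (g i) J)
    (hW : ∀ j, 1 ≤ j → j ≤ k + 1 → ∀ x ∈ J, wronskianOn J g j x ≠ 0)
    {a : ℕ → ℝ} (ha : ∃ i < k + 1, a i ≠ 0) :
    {x ∈ J | ∑ i ∈ Finset.range (k + 1), a i * g i x = 0}.encard ≤ k := by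
  induction k generalizing J g a with
  | zero =>
    rw [setOf_sum_mul_eq_zero_eq_empty (hW 1 le_rfl le_rfl) ha nofun, encard_empty]
    exact zero_le
  | succ k ih =>
    by_cases htail : ∀ i < k + 1, a (i + 1) = 0
    · simp [setOf_sum_mul_eq_zero_eq_empty (hW 1 le_rfl (by omega)) ha htail]
    push Not at htail
    have hg0 : ∀ x ∈ J, g 0 x ≠ 0 := fun x hx => wronskianOn_one J g x ▸ hW 1 le_rfl (by omega) x hx
    have hgU : ∀ i < k + 2, ContDiffOn ℝ ∞ (g i) (interior J) := fun i hi =>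
      (hg i hi).mono interior_subset
    have hWU : ∀ j, 1 ≤ j → j ≤ k + 1 → ∀ x ∈ interior J,
        wronskianOn (interior J) (derivDivFirst (interior J) g) j x ≠ 0 :=
      fun j _ hjk x hx => wronskianOn_interior_derivDivFirst_ne_zero
        (fun i hi => hg i (by omega)) hg0 (hW (j + 1) (by omega) (by omega)) hx
    push_cast
    exact (hJ.encard_setOf_sum_mul_eq_zero_le_derivDivFirst hg hg0 a).trans
      (add_le_add_left (ih hJ.interior (contDiffOn_derivDivFirst isOpen_interior.uniqueDiffOn hgU
        fun x hx => hg0 x (interior_subset hx)) hWU htail) 1)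

section ComplementPieces

variable {Υ : Set ℝ}

/-- For finite `Υ`, the `t`-th connected component of `Υᶜ`, counted from the left. -/
def complPiece (Υ : Set ℝ) (t : ℕ) : Set ℝ := {z | z ∉ Υ ∧ (Υ ∩ Iio z).ncard = t}

lemma isOpen_complPiece (hΥ : Υ.Finite) (t : ℕ) : IsOpen (complPiece Υ t) := by
  refine isOpen_iff_mem_nhds.2 fun z ⟨hzΥ, hzt⟩ => ?_
  obtain ⟨l, u, hz, hlu⟩ := mem_nhds_iff_exists_Ioo_subset.1 (hΥ.isClosed.isOpen_compl.mem_nhds hzΥ)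
  filter_upwards [Ioo_mem_nhds hz.1 hz.2] with w hw
  refine ⟨hlu hw, hzt ▸ congrArg ncard (ext fun y => and_congr_right fun hy => ?_)⟩
  have hy' : y ∉ Ioo l u := fun h => hlu h hy
  simp only [mem_Ioo, not_and_or, not_lt] at hy'
  simp only [mem_Iio, mem_Ioo] at hw hz ⊢
  constructor <;> intro <;> rcases hy' with h | h <;> linarith

lemma ordConnected_complPiece (hΥ : Υ.Finite) (t : ℕ) : (complPiece Υ t).OrdConnected := by
  have hmono : Monotone fun z => (Υ ∩ Iio z).ncard := fun z w hzw =>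
    ncard_le_ncard (inter_subset_inter_right _ (Iio_subset_Iio hzw)) (hΥ.subset inter_subset_left)
  refine ⟨fun z₁ ⟨_, ht₁⟩ z₂ ⟨hz₂, ht₂⟩ z hz => ⟨fun hzΥ => ?_,
    le_antisymm (ht₂ ▸ hmono hz.2) (ht₁ ▸ hmono hz.1)⟩⟩
  have hlt : (Υ ∩ Iio z₁).ncard < (Υ ∩ Iio z₂).ncard := by
    refine ncard_lt_ncard ?_ (hΥ.subset inter_subset_left)
    refine ssubset_of_subset_of_ne (inter_subset_inter_right _ (Iio_subset_Iio (hz.1.trans hz.2)))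
      fun h => ?_
    have : z ∈ Υ ∩ Iio z₂ := ⟨hzΥ, lt_of_le_of_ne hz.2 (ne_of_mem_of_not_mem hzΥ hz₂)⟩
    rw [← h] at this
    exact this.2.not_ge hz.1
  omega

lemma compl_subset_biUnion_complPiece (hΥ : Υ.Finite) :
    Υᶜ ⊆ ⋃ t ∈ Finset.range (Υ.ncard + 1), complPiece Υ t := fun _ hz =>
  mem_biUnion (Finset.mem_range.2 (Nat.lt_succ_of_le (ncard_le_ncard inter_subset_left hΥ)))
    ⟨hz, rfl⟩

theorem encard_le_of_forall_encard_inter_le (hΥ : Υ.Finite) {Z : Set ℝ} {m : ℕ∞}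
    (h : ∀ O, IsOpen O → O.OrdConnected → Disjoint O Υ → (Z ∩ O).encard ≤ m) :
    Z.encard ≤ (Υ.ncard + 1) * m + Υ.ncard := by
  have hcover : Z ⊆ (Z ∩ Υ) ∪ ⋃ t ∈ Finset.range (Υ.ncard + 1), Z ∩ complPiece Υ t := by
    intro z hz
    by_cases hzΥ : z ∈ Υ
    · exact Or.inl ⟨hz, hzΥ⟩
    · obtain ⟨t, ht, hzt⟩ := mem_iUnion₂.1 (compl_subset_biUnion_complPiece hΥ hzΥ)
      exact Or.inr (mem_biUnion ht ⟨hz, hzt⟩)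
  calc Z.encard
      ≤ (Z ∩ Υ).encard + ∑ t ∈ Finset.range (Υ.ncard + 1), (Z ∩ complPiece Υ t).encard :=
        (encard_le_encard hcover).trans ((encard_union_le _ _).trans
          (add_le_add_right (Finset.set_encard_biUnion_le _ _) _))
    _ ≤ Υ.ncard + ∑ _t ∈ Finset.range (Υ.ncard + 1), m := by
        gcongr with t
        · exact (encard_le_encard inter_subset_right).trans hΥ.cast_ncard_eq.ge
        · exact h _ (isOpen_complPiece hΥ t) (ordConnected_complPiece hΥ t)
            (disjoint_left.2 fun _ hz => hz.1)
    _ = (Υ.ncard + 1) * m + Υ.ncard := by simp [add_comm]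

end ComplementPieces

theorem stmt2_general (k : ℕ) (I : Set ℝ) (hI : I.OrdConnected)
    (f : ℕ → ℝ → ℝ) (hf : ∀ i < k, AnalyticOn ℝ (f i) I)
    (hΥ : {x ∈ I | ∃ i, 1 ≤ i ∧ i ≤ k ∧ wronskianOn I f i x = 0}.Finite)
    (a : ℕ → ℝ) (ha : ∃ i < k, a i ≠ 0) :
    {x ∈ I | (∑ i ∈ Finset.range k, a i * f i x) = 0}.Finite ∧
      {x ∈ I | (∑ i ∈ Finset.range k, a i * f i x) = 0}.ncard ≤
        (1 + {x ∈ I | ∃ i, 1 ≤ i ∧ i ≤ k ∧ wronskianOn I f i x = 0}.ncard) * k - 1 := by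
  obtain ⟨k, rfl⟩ : ∃ k', k = k' + 1 := Nat.exists_eq_add_one.2 (by obtain ⟨i, hi, -⟩ := ha; omega)
  set Υ := {x ∈ I | ∃ i, 1 ≤ i ∧ i ≤ k + 1 ∧ wronskianOn I f i x = 0}
  have hpiece : ∀ O, IsOpen O → O.OrdConnected → Disjoint O Υ →
      ({x ∈ I | ∑ i ∈ Finset.range (k + 1), a i * f i x = 0} ∩ O).encard ≤ k := by
    intro O hO hO' hOΥ
    have hW : ∀ j, 1 ≤ j → j ≤ k + 1 → ∀ x ∈ I ∩ O, wronskianOn (I ∩ O) f j x ≠ 0 :=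
      fun j hj1 hjk x hx hzero => disjoint_left.1 hOΥ hx.2
        ⟨hx.1, j, hj1, hjk, (wronskianOn_inter_of_isOpen hO hx.2).symm.trans hzero⟩
    refine le_of_eq_of_le ?_ ((hI.inter hO').encard_setOf_sum_mul_eq_zero_le
      (fun i hi => (hf i hi).contDiffOn_of_completeSpace.mono inter_subset_left) hW ha)
    congr 1
    ext x
    simp only [mem_inter_iff, mem_ofPred_eq]
    tauto
  rw [← encard_le_coe_iff_finite_ncard_le]
  refine (encard_le_of_forall_encard_inter_le hΥ hpiece).trans (le_of_eq ?_)
  norm_cast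
  ring_nf
  omega

/-- If `f 0, …, f (k-1)` are analytic on an interval `I` and the set `Υ` of points of `I`
where some Wronskian `W(f 0, …, f (i-1))`, `1 ≤ i ≤ k`, vanishes is finite, then any
nontrivial linear combination has at most `(1 + |Υ|) * k - 1` distinct zeros in `I`. -/
theorem stmt2 (k : ℕ) (hk : 1 ≤ k) (I : Set ℝ) (hI : I.OrdConnected) (hI' : I.Nontrivial)
    (f : ℕ → ℝ → ℝ) (hf : ∀ i < k, AnalyticOn ℝ (f i) I)
    (hΥ : {x ∈ I | ∃ i, 1 ≤ i ∧ i ≤ k ∧ wronskianOn I f i x = 0}.Finite)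
    (a : ℕ → ℝ) (ha : ∃ i < k, a i ≠ 0) :
    {x ∈ I | (∑ i ∈ Finset.range k, a i * f i x) = 0}.Finite ∧
      {x ∈ I | (∑ i ∈ Finset.range k, a i * f i x) = 0}.ncard ≤
        (1 + {x ∈ I | ∃ i, 1 ≤ i ∧ i ≤ k ∧ wronskianOn I f i x = 0}.ncard) * k - 1 :=
  stmt2_general k I hI f hf hΥ a ha
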